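/- For all n ≥ 1, every permutation π of {1,…,n} satisfies ssc(π) ≤ n−1; that is, applying the stack-sorting operator S at most n−1 times to π yields the identity word 1,2,…,n. -/

import Mathlib

/-- The largest letter of a word (`0` for the empty word). -/
def listMax (l : List ℕ) : ℕ := l.foldr max 0

lemma listMax_mem {l : List ℕ} (h : l ≠ []) : listMax l ∈ l := by
  induction l with
  | nil => simp at h
  | cons a t ih =>
    rcases eq_or_ne t [] with rfl | ht
    · simp [listMax]
    · have ht' := ih ht
      have hcons : listMax (a :: t) = max a (listMax t) := rfl
      rcases le_total a (listMax t) with hle | hle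
      · rw [hcons, max_eq_right hle]; exact List.mem_cons_of_mem _ ht'
      · rw [hcons, max_eq_left hle]; exact List.mem_cons_self

/-- The stack-sorting operator `S`: `S` of the empty word is the empty word, and
if `π` is nonempty, writing `π = L·m·R` where `m` is the greatest letter of `π`,
then `S(π) = S(L)·S(R)·m`. -/
def stackSort : List ℕ → List ℕ
  | [] => []
  | x :: xs =>
    stackSort ((x :: xs).take ((x :: xs).idxOf (listMax (x :: xs)))) ++
      stackSort ((x :: xs).drop ((x :: xs).idxOf (listMax (x :: xs)) + 1)) ++
      [listMax (x :: xs)]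
termination_by l => l.length
decreasing_by
  · have hm : listMax (x :: xs) ∈ x :: xs := listMax_mem (by simp)
    have hi : (x :: xs).idxOf (listMax (x :: xs)) < (x :: xs).length :=
      List.idxOf_lt_length_iff.mpr hm
    simp only [List.length_take, List.length_cons] at *
    omega
  · simp only [List.length_drop, List.length_cons]
    omega

/-- `π` is a permutation of `{1, …, n}`, viewed as a word containing each of
`1, …, n` exactly once. -/
def IsPermWord (n : ℕ) (π : List ℕ) : Prop := π.Perm (List.range' 1 n)

/-- The stack-sorting complexity of `π`: the least `k ≥ 0` such that `S^k(π)`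
is the identity word `1, 2, …, n` (where `n` is the length of `π`). -/
noncomputable def ssc (π : List ℕ) : ℕ :=
  sInf {k : ℕ | stackSort^[k] π = List.range' 1 π.length}

/-! The maximum `m` of a word is sent to the end by one pass, `S(L·m·R) = S(L)·S(R)·m`, and
afterwards it stays there: for a word `w` all of whose letters are below `m`, `S(w·m) = S(w)·m`.
So each pass after the first acts only on a word that is one letter shorter, and a word of
length at most `k + 1` with distinct letters is sorted after `k` passes. -/

open scoped List

@[simp]
lemma stackSort_nil : stackSort [] = [] := by
  rw [stackSort]

lemma listMax_le_iff {l : List ℕ} {m : ℕ} : listMax l ≤ m ↔ ∀ x ∈ l, x ≤ m := by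
  induction l with
  | nil => simp [listMax]
  | cons a t ih =>
    change max a (listMax t) ≤ m ↔ _
    rw [max_le_iff, ih, List.forall_mem_cons]

lemma le_listMax {l : List ℕ} {x : ℕ} (h : x ∈ l) : x ≤ listMax l :=
  listMax_le_iff.mp le_rfl x h

lemma listMax_append_cons {L R : List ℕ} {m : ℕ} (hL : ∀ x ∈ L, x ≤ m) (hR : ∀ x ∈ R, x ≤ m) :
    listMax (L ++ m :: R) = m :=
  le_antisymm (listMax_le_iff.mpr (by simp_all [or_imp]))
    (le_listMax List.mem_append_cons_self)

lemma exists_eq_append_max_cons {l : List ℕ} (hl : l ≠ []) :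
    ∃ L m R, l = L ++ m :: R ∧ (∀ x ∈ L, x < m) ∧ ∀ x ∈ R, x ≤ m := by
  obtain ⟨L, R, hLR, hm⟩ := List.eq_append_cons_of_mem (listMax_mem hl)
  refine ⟨L, listMax l, R, hLR, fun x hx => ?_, fun x hx => le_listMax ?_⟩
  · refine (le_listMax ?_).lt_of_ne (ne_of_mem_of_not_mem hx hm)
    rw [hLR]
    exact List.mem_append_left _ hx
  · rw [hLR]
    exact List.mem_append_right _ (List.mem_cons_of_mem _ hx)

lemma stackSort_append_cons {L R : List ℕ} {m : ℕ} (hL : ∀ x ∈ L, x < m)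
    (hR : ∀ x ∈ R, x ≤ m) :
    stackSort (L ++ m :: R) = stackSort L ++ stackSort R ++ [m] := by
  have hmax : listMax (L ++ m :: R) = m := listMax_append_cons (fun x hx => (hL x hx).le) hR
  have hidx : (L ++ m :: R).idxOf m = L.length := by
    rw [List.idxOf_append_of_notMem fun h => (hL m h).false, List.idxOf_cons_self, add_zero]
  obtain ⟨y, ys, hys⟩ : ∃ y ys, L ++ m :: R = y :: ys := List.exists_cons_of_ne_nil (by simp)
  rw [hys, stackSort, ← hys, hmax, hidx, List.take_left]
  simp

lemma stackSort_append_singleton {w : List ℕ} {m : ℕ} (hw : ∀ x ∈ w, x < m) :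
    stackSort (w ++ [m]) = stackSort w ++ [m] := by
  simpa using stackSort_append_cons (R := []) hw (by simp)

theorem stackSort_perm (l : List ℕ) : stackSort l ~ l := by
  induction hn : l.length using Nat.strong_induction_on generalizing l with
  | _ n ih =>
  rcases eq_or_ne l [] with rfl | hl
  · simp
  obtain ⟨L, m, R, rfl, hL, hR⟩ := exists_eq_append_max_cons hl
  rw [List.length_append, List.length_cons] at hn
  rw [stackSort_append_cons hL hR]
  calc stackSort L ++ stackSort R ++ [m]
      ~ L ++ R ++ [m] := ((ih _ (by omega) L rfl).append (ih _ (by omega) R rfl)).append_right _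
    _ ~ m :: (L ++ R) := List.perm_append_singleton _ _
    _ ~ L ++ m :: R := List.perm_middle.symm

theorem stackSort_iterate_perm (k : ℕ) (l : List ℕ) : stackSort^[k] l ~ l := by
  induction k with
  | zero => rfl
  | succ k ih =>
    rw [Function.iterate_succ_apply']
    exact (stackSort_perm _).trans ih

lemma stackSort_iterate_append_singleton {w : List ℕ} {m : ℕ} (hw : ∀ x ∈ w, x < m) (k : ℕ) :
    stackSort^[k] (w ++ [m]) = stackSort^[k] w ++ [m] := by
  induction k generalizing w with
  | zero => rfl
  | succ k ih =>
    have hw' : ∀ x ∈ stackSort w, x < m := fun x hx => hw x ((stackSort_perm w).subset hx)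
    rw [Function.iterate_succ_apply, Function.iterate_succ_apply, stackSort_append_singleton hw,
      ih hw']

theorem sortedLT_stackSort_iterate {l : List ℕ} (hl : l.Nodup) {k : ℕ} (hk : l.length ≤ k + 1) :
    (stackSort^[k] l).SortedLT := by
  rw [List.sortedLT_iff_pairwise]
  induction k generalizing l with
  | zero =>
    match l, hk with
    | [], _ | [_], _ => simp
  | succ k ih =>
    rcases eq_or_ne l [] with rfl | hne
    · rw [Function.iterate_fixed stackSort_nil]
      exact List.Pairwise.nil
    obtain ⟨L, m, R, rfl, hL, hR⟩ := exists_eq_append_max_cons hne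
    have hLR : (L ++ R).Nodup := (List.nodup_middle.mp hl).of_cons
    have hbound : ∀ x ∈ L ++ R, x < m := by
      have hmR : m ∉ R := fun h => (List.nodup_middle.mp hl).notMem (List.mem_append_right L h)
      simp only [List.mem_append]
      rintro x (hx | hx)
      · exact hL x hx
      · exact (hR x hx).lt_of_ne (ne_of_mem_of_not_mem hx hmR)
    set w := stackSort L ++ stackSort R
    have hw : w ~ L ++ R := (stackSort_perm L).append (stackSort_perm R)
    rw [Function.iterate_succ_apply, stackSort_append_cons hL hR,
      stackSort_iterate_append_singleton (fun x hx => hbound x (hw.subset hx)), List.pairwise_append]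
    refine ⟨ih (hw.nodup_iff.mpr hLR) ?_, List.pairwise_singleton _ _, ?_⟩
    · rw [hw.length_eq]
      simp only [List.length_append, List.length_cons] at hk ⊢
      omega
    · simp only [List.mem_singleton, forall_eq]
      exact fun x hx => hbound x (hw.subset ((stackSort_iterate_perm k w).subset hx))

theorem ssc_le_n_sub_one_general (n : ℕ) (π : List ℕ) (hπ : IsPermWord n π) :
    stackSort^[n - 1] π = List.range' 1 n ∧ ssc π ≤ n - 1 := by
  have hlen : π.length = n := by simpa using hπ.length_eq
  have hsorted : stackSort^[n - 1] π = List.range' 1 n :=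
    ((stackSort_iterate_perm _ _).trans hπ).eq_of_sortedLE
      (sortedLT_stackSort_iterate (hπ.nodup_iff.mpr List.nodup_range') (by omega)).sortedLE
      (List.sortedLE_range' _ _ _)
  exact ⟨hsorted, Nat.sInf_le (by simpa [hlen] using hsorted)⟩

/-- For all `n ≥ 1`, every permutation `π` of `{1,…,n}` satisfies `ssc(π) ≤ n−1`;
that is, applying `S` at most `n−1` times to `π` yields the identity word. -/
theorem ssc_le_n_sub_one (n : ℕ) (hn : 1 ≤ n) (π : List ℕ) (hπ : IsPermWord n π) :
    stackSort^[n - 1] π = List.range' 1 n ∧ ssc π ≤ n - 1 :=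
  ssc_le_n_sub_one_general n π hπ
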